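/- arXiv:2506.15895 — 2 statements merged into one kernel-verified Lean document; each statement's English description precedes it below -/
import Mathlib

section
/- Let U_1, …, U_m be nonempty closed convex subsets of R^n with nonempty intersection U. Then the sequence (x_k) generated by the Parallel Polyhedral Projection Method from any starting point x_1 is bounded, and every accumulation point of (x_k) belongs to U. -/
/-!
Every point `u` of `⋂ i, U i` lies in each polyhedron `Ω_k`, by the variational inequality
characterising the projections onto the convex sets `U i`. Projecting onto `Ω_k` therefore gives the
Fejér inequality `‖x_{k+1} - u‖² + ‖x_k - x_{k+1}‖² ≤ ‖x_k - u‖²`: the iterates stay in a ball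
around `u` and the step lengths are square-summable. Since `x_{k+1} ∈ Ω_k`, the distance from `x_k`
to each `U i` is at most the step length, which tends to zero, so every cluster point lies in each
closed `U i`.
-/

open Metric Filter Topology

/-- `p` is the metric projection of `z` onto `X`. -/
def IsProj {n : ℕ} (X : Set (EuclideanSpace ℝ (Fin n))) (z p : EuclideanSpace ℝ (Fin n)) : Prop :=
  p ∈ X ∧ ∀ y ∈ X, dist z p ≤ dist z y

section InnerProduct

variable {F : Type*} [NormedAddCommGroup F] [InnerProductSpace ℝ F]

theorem convex_setOf_inner_sub_le_zero (a b : F) :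
    Convex ℝ {z : F | inner ℝ a (z - b) ≤ (0 : ℝ)} := by
  have hset : {z : F | inner ℝ a (z - b) ≤ (0 : ℝ)} = {z | inner ℝ a z ≤ inner ℝ a b} := by
    ext z
    simp only [Set.mem_ofPred_eq, inner_sub_right, sub_nonpos]
  rw [hset]
  exact convex_halfSpace_le (innerₛₗ ℝ a).isLinear _

theorem norm_sub_sq_add_norm_sub_sq_le_of_inner_nonpos {x x' u : F}
    (h : inner ℝ (x - x') (u - x') ≤ (0 : ℝ)) :
    ‖x' - u‖ ^ 2 + ‖x - x'‖ ^ 2 ≤ ‖x - u‖ ^ 2 := by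
  have hexp := norm_add_sq_real (x - x') (x' - u)
  rw [sub_add_sub_cancel, ← neg_sub u x', inner_neg_right, norm_neg, norm_sub_rev u x'] at hexp
  linarith

theorem norm_sub_le_norm_sub_of_inner_nonpos {x x' q : F}
    (h : inner ℝ (x - q) (x' - q) ≤ (0 : ℝ)) : ‖x - q‖ ≤ ‖x - x'‖ := by
  have hsplit : inner ℝ (x - q) (x - q) =
      inner ℝ (x - q) (x - x') + inner ℝ (x - q) (x' - q) := by
    rw [← inner_add_right, sub_add_sub_cancel]
  rw [real_inner_self_eq_norm_sq] at hsplit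
  have hcs := real_inner_le_norm (x - q) (x - x')
  nlinarith [norm_nonneg (x - q), norm_nonneg (x - x')]

end InnerProduct

theorem IsProj.inner_sub_le_zero {n : ℕ} {X : Set (EuclideanSpace ℝ (Fin n))}
    (hX : Convex ℝ X) {z q : EuclideanSpace ℝ (Fin n)} (h : IsProj X z q) :
    ∀ y ∈ X, inner ℝ (z - q) (y - q) ≤ (0 : ℝ) := by
  have : Nonempty X := ⟨⟨q, h.1⟩⟩
  refine (norm_eq_iInf_iff_real_inner_le_zero hX h.1).mp (le_antisymm ?_ ?_)
  · exact le_ciInf fun w => by simpa only [dist_eq_norm] using h.2 w w.2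
  · exact ciInf_le ⟨0, by rintro _ ⟨w, rfl⟩; positivity⟩ (⟨q, h.1⟩ : X)

theorem tendsto_atTop_zero_of_add_le {a b : ℕ → ℝ} (ha : ∀ k, 0 ≤ a k) (hb : ∀ k, 0 ≤ b k)
    (h : ∀ k, a (k + 1) + b k ≤ a k) : Tendsto b atTop (𝓝 0) := by
  have hsum : ∀ N, ∑ k ∈ Finset.range N, b k ≤ a 0 - a N := by
    intro N
    induction N with
    | zero => simp
    | succ N ih => rw [Finset.sum_range_succ]; linarith [h N]
  exact (summable_of_sum_range_le hb fun N => (hsum N).trans (by linarith [ha N]))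
    |>.tendsto_atTop_zero

theorem IsClosed.mem_of_mapClusterPt_of_tendsto_dist {α ι : Type*} [PseudoMetricSpace α]
    {l : Filter ι} {s : Set α} (hs : IsClosed s) {x p : ι → α} {y : α}
    (hy : MapClusterPt y l x) (hp : ∀ i, p i ∈ s)
    (hxp : Tendsto (fun i => dist (x i) (p i)) l (𝓝 0)) : y ∈ s := by
  rw [← hs.closure_eq, Metric.mem_closure_iff]
  intro ε hε
  have hnear : ∃ᶠ i in l, x i ∈ ball y (ε / 2) :=
    mapClusterPt_iff_frequently.1 hy _ (ball_mem_nhds y (half_pos hε))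
  obtain ⟨i, hxy, hxpi⟩ := (hnear.and_eventually (hxp.eventually_lt_const (half_pos hε))).exists
  refine ⟨p i, hp i, ?_⟩
  calc dist y (p i) ≤ dist y (x i) + dist (x i) (p i) := dist_triangle _ _ _
    _ < ε / 2 + ε / 2 := add_lt_add (by rwa [dist_comm]) hxpi
    _ = ε := add_halves ε

theorem stmt4_general {n m : ℕ} (U : Fin m → Set (EuclideanSpace ℝ (Fin n)))
    (hcl : ∀ i, IsClosed (U i)) (hcv : ∀ i, Convex ℝ (U i))
    (hU : (⋂ i, U i).Nonempty)
    (x : ℕ → EuclideanSpace ℝ (Fin n)) (p : ℕ → Fin m → EuclideanSpace ℝ (Fin n))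
    (hp : ∀ k i, IsProj (U i) (x k) (p k i))
    (hstep : ∀ k, IsProj
      (⋂ i, {z : EuclideanSpace ℝ (Fin n) | inner ℝ (x k - p k i) (z - p k i) ≤ (0 : ℝ)})
      (x k) (x (k + 1))) :
    (∃ C : ℝ, ∀ k, ‖x k‖ ≤ C) ∧
      ∀ y : EuclideanSpace ℝ (Fin n), MapClusterPt y atTop x → y ∈ ⋂ i, U i := by
  obtain ⟨u, hu⟩ := hU
  rw [Set.mem_iInter] at hu
  have hfejer : ∀ k, ‖x (k + 1) - u‖ ^ 2 + ‖x k - x (k + 1)‖ ^ 2 ≤ ‖x k - u‖ ^ 2 := fun k =>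
    norm_sub_sq_add_norm_sub_sq_le_of_inner_nonpos <|
      (hstep k).inner_sub_le_zero (convex_iInter fun i => convex_setOf_inner_sub_le_zero _ _) u <|
        Set.mem_iInter.2 fun i => (hp k i).inner_sub_le_zero (hcv i) u (hu i)
  have hdist_u : ∀ k, ‖x k - u‖ ≤ ‖x 0 - u‖ := by
    refine fun k => (pow_le_pow_iff_left₀ (norm_nonneg _) (norm_nonneg _) two_ne_zero).1 ?_
    exact antitone_nat_of_succ_le (f := fun k => ‖x k - u‖ ^ 2)
      (fun k => by linarith [hfejer k, sq_nonneg ‖x k - x (k + 1)‖]) (Nat.zero_le k)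
  have hsteps : Tendsto (fun k => ‖x k - x (k + 1)‖) atTop (𝓝 0) := by
    simpa using (tendsto_atTop_zero_of_add_le (a := fun k => ‖x k - u‖ ^ 2)
      (fun _ => sq_nonneg _) (fun _ => sq_nonneg _) hfejer).sqrt
  refine ⟨⟨‖x 0 - u‖ + ‖u‖, fun k => ?_⟩, fun y hy => Set.mem_iInter.2 fun i => ?_⟩
  · calc ‖x k‖ ≤ ‖x k - u‖ + ‖u‖ := norm_le_norm_sub_add _ _
      _ ≤ ‖x 0 - u‖ + ‖u‖ := by linarith [hdist_u k]
  · refine (hcl i).mem_of_mapClusterPt_of_tendsto_dist hy (fun k => (hp k i).1) ?_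
    refine squeeze_zero (fun _ => dist_nonneg) (fun k => ?_) hsteps
    rw [dist_eq_norm]
    exact norm_sub_le_norm_sub_of_inner_nonpos (Set.mem_iInter.1 (hstep k).1 i)

/-- The 3PM sequence is bounded and all its accumulation points are in the intersection. -/
theorem stmt4 {n m : ℕ} (U : Fin m → Set (EuclideanSpace ℝ (Fin n)))
    (hne : ∀ i, (U i).Nonempty) (hcl : ∀ i, IsClosed (U i)) (hcv : ∀ i, Convex ℝ (U i))
    (hU : (⋂ i, U i).Nonempty)
    (x : ℕ → EuclideanSpace ℝ (Fin n)) (p : ℕ → Fin m → EuclideanSpace ℝ (Fin n))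
    (hp : ∀ k i, IsProj (U i) (x k) (p k i))
    (hstep : ∀ k, IsProj
      (⋂ i, {z : EuclideanSpace ℝ (Fin n) | inner ℝ (x k - p k i) (z - p k i) ≤ (0 : ℝ)})
      (x k) (x (k + 1))) :
    (∃ C : ℝ, ∀ k, ‖x k‖ ≤ C) ∧
      ∀ y : EuclideanSpace ℝ (Fin n), MapClusterPt y atTop x → y ∈ ⋂ i, U i :=
  stmt4_general U hcl hcv hU x p hp hstep
end

section
/- Let U_1, …, U_m be nonempty closed convex sets in R^n with nonempty intersection U, and (ε_k) ⊂ [0,1) with sup_k ε_k < 1. Then the sequence (x_k) generated by A3PM from any starting point converges to a point x̄ ∈ U, and if additionally the error bound ω·dist(x, U) ≤ max_i dist(x, U_i) holds (ω ∈ (0,1)) in a neighborhood of x̄, then ‖x_{k+1} − x̄‖ ≤ sqrt(1 − (1 − sup_k ε_k)⁴ ω²/4)·‖x_k − x̄‖ for all large k. -/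
/-!
Every step is a Fejér step: the cut `Ω̂_k` contains `U`, so `x_{k+1}` (which satisfies the
variational inequality of a projection onto `Ω̂_k`) obeys
`‖x_k - x_{k+1}‖² + ‖x_{k+1} - u‖² ≤ ‖x_k - u‖²` for every `u ∈ U`. Chaining the two approximate
projections through the halfspace `{⟪x_k - p̂_{ik}, z - p̂_{ik}⟫ ≤ 0} ⊇ Ω̂_k` gives
`(1 - ε)² dist(x_k, U_i) ≤ ‖x_k - x_{k+1}‖`. The steps tend to zero, so every cluster point of
the bounded sequence lies in `U`, and Fejér monotonicity upgrades this to convergence. Near the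
limit `x̄`, Fejér monotonicity also gives `‖x_k - x̄‖ ≤ 2 dist(x_k, U)`, and the error bound turns
the step estimate into a fixed fraction of `‖x_k - x̄‖`, which is the linear rate.
-/

open Metric Filter Topology

/-- `xhat` is an `ε`-approximate projection of `x` onto `X`. -/
def ApproxProj {n : ℕ} (X : Set (EuclideanSpace ℝ (Fin n)))
    (x xhat : EuclideanSpace ℝ (Fin n)) (ε : ℝ) : Prop :=
  Metric.infDist xhat X ≤ ε * Metric.infDist x X ∧
    ∀ z ∈ X, inner ℝ (z - xhat) (x - xhat) ≤ (0 : ℝ)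

theorem le_sqrt_one_sub_sq_mul {a b c d : ℝ} (ha : 0 ≤ a) (hc : 0 ≤ c)
    (h : d ^ 2 + b ^ 2 ≤ a ^ 2) (hd : c * a ≤ d) : b ≤ √(1 - c ^ 2) * a := by
  have hca : (c * a) ^ 2 ≤ d ^ 2 := pow_le_pow_left₀ (by positivity) hd 2
  calc b ≤ √(b ^ 2) := by rw [Real.sqrt_sq_eq_abs]; exact le_abs_self b
    _ ≤ √((1 - c ^ 2) * a ^ 2) := Real.sqrt_le_sqrt (by nlinarith)
    _ = √(1 - c ^ 2) * a := by rw [Real.sqrt_mul' _ (sq_nonneg a), Real.sqrt_sq ha]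

theorem one_sub_mul_infDist_le_dist {α : Type*} [PseudoMetricSpace α] {s : Set α} {x y : α}
    {ε : ℝ} (h : infDist y s ≤ ε * infDist x s) : (1 - ε) * infDist x s ≤ dist x y := by
  linarith [infDist_le_infDist_add_dist (s := s) (x := x) (y := y), dist_comm x y]

theorem IsClosed.mem_of_tendsto_infDist_zero {α β : Type*} [PseudoMetricSpace α] {s : Set α}
    {l : Filter β} [l.NeBot] {y : β → α} {a : α} (hs : IsClosed s) (hne : s.Nonempty)
    (hy : Tendsto y l (𝓝 a)) (hd : Tendsto (fun k => infDist (y k) s) l (𝓝 0)) : a ∈ s :=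
  (hs.mem_iff_infDist_zero hne).2 <|
    tendsto_nhds_unique (((continuous_infDist_pt s).tendsto a).comp hy) hd

section InnerProductSpace

variable {E : Type*} [NormedAddCommGroup E] [InnerProductSpace ℝ E]

theorem sq_norm_sub_add_sq_norm_sub_le_of_inner_nonpos {x y u : E}
    (h : inner ℝ (u - y) (x - y) ≤ (0 : ℝ)) : ‖x - y‖ ^ 2 + ‖y - u‖ ^ 2 ≤ ‖x - u‖ ^ 2 := by
  have hinner : inner ℝ (x - y) (y - u) = -inner ℝ (u - y) (x - y) := by
    rw [real_inner_comm, ← inner_neg_left, neg_sub]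
  have hsplit := norm_add_sq_real (x - y) (y - u)
  rw [sub_add_sub_cancel, hinner] at hsplit
  linarith

theorem norm_sub_le_infDist_of_subset_halfspace {s : Set E} {x p : E} (hs : s.Nonempty)
    (hsub : s ⊆ {z | inner ℝ (x - p) (z - p) ≤ (0 : ℝ)}) : ‖x - p‖ ≤ infDist x s := by
  refine (le_infDist hs).2 fun z hz => ?_
  have hsplit : ‖x - p‖ ^ 2 = inner ℝ (x - p) (x - z) + inner ℝ (x - p) (z - p) := by
    rw [← inner_add_right, sub_add_sub_cancel, real_inner_self_eq_norm_sq]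
  have hcs : inner ℝ (x - p) (x - z) ≤ ‖x - p‖ * ‖x - z‖ := real_inner_le_norm _ _
  have hzp : inner ℝ (x - p) (z - p) ≤ (0 : ℝ) := hsub hz
  rw [dist_eq_norm]
  nlinarith [norm_nonneg (x - p), norm_nonneg (x - z)]

end InnerProductSpace

section Fejer

variable {E : Type*} [NormedAddCommGroup E]

def StronglyFejerMonotone (S : Set E) (x : ℕ → E) : Prop :=
  ∀ u ∈ S, ∀ k, ‖x k - x (k + 1)‖ ^ 2 + ‖x (k + 1) - u‖ ^ 2 ≤ ‖x k - u‖ ^ 2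

namespace StronglyFejerMonotone

variable {S : Set E} {x : ℕ → E}

theorem antitone_norm_sub (h : StronglyFejerMonotone S x) {u : E} (hu : u ∈ S) :
    Antitone fun k => ‖x k - u‖ :=
  antitone_nat_of_succ_le fun k =>
    (pow_le_pow_iff_left₀ (norm_nonneg _) (norm_nonneg _) two_ne_zero).1 <| by
      linarith [h u hu k, sq_nonneg ‖x k - x (k + 1)‖]

theorem tendsto_norm_sub_succ (h : StronglyFejerMonotone S x) (hS : S.Nonempty) :
    Tendsto (fun k => ‖x k - x (k + 1)‖) atTop (𝓝 0) := by
  obtain ⟨u, hu⟩ := hS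
  have hanti : Antitone fun k => ‖x k - u‖ ^ 2 := fun a b hab =>
    pow_le_pow_left₀ (norm_nonneg _) (h.antitone_norm_sub hu hab) 2
  have hL := tendsto_atTop_ciInf hanti ⟨0, by rintro _ ⟨k, rfl⟩; positivity⟩
  have hgap := hL.sub (hL.comp (tendsto_add_atTop_nat 1))
  rw [sub_self] at hgap
  have hsq : Tendsto (fun k => ‖x k - x (k + 1)‖ ^ 2) atTop (𝓝 0) :=
    squeeze_zero (fun _ => by positivity)
      (fun k => by simp only [Function.comp_apply]; linarith [h u hu k]) hgap
  simpa [Real.sqrt_sq (norm_nonneg _)] using hsq.sqrt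

theorem tendsto_of_tendsto_subseq (h : StronglyFejerMonotone S x) {xbar : E} (hxbar : xbar ∈ S)
    {φ : ℕ → ℕ} (hφ : StrictMono φ) (hlim : Tendsto (x ∘ φ) atTop (𝓝 xbar)) :
    Tendsto x atTop (𝓝 xbar) := by
  rw [tendsto_iff_norm_sub_tendsto_zero] at hlim ⊢
  exact (tendsto_iff_tendsto_subseq_of_antitone (h.antitone_norm_sub hxbar) hφ.tendsto_atTop).2 hlim

theorem exists_tendsto [ProperSpace E] {ι : Sort*} {U : ι → Set E}
    (h : StronglyFejerMonotone (⋂ i, U i) x) (hcl : ∀ i, IsClosed (U i))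
    (hne : (⋂ i, U i).Nonempty) (hdist : ∀ i, Tendsto (fun k => infDist (x k) (U i)) atTop (𝓝 0)) :
    ∃ xbar ∈ ⋂ i, U i, Tendsto x atTop (𝓝 xbar) := by
  obtain ⟨u, hu⟩ := hne
  obtain ⟨xbar, -, φ, hφ, hlim⟩ := (isCompact_closedBall u ‖x 0 - u‖).tendsto_subseq fun k => by
    simpa [dist_eq_norm] using h.antitone_norm_sub hu (Nat.zero_le k)
  have hxbar : xbar ∈ ⋂ i, U i := Set.mem_iInter.2 fun i =>
    (hcl i).mem_of_tendsto_infDist_zero ⟨u, Set.mem_iInter.1 hu i⟩ hlim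
      ((hdist i).comp hφ.tendsto_atTop)
  exact ⟨xbar, hxbar, h.tendsto_of_tendsto_subseq hxbar hφ hlim⟩

theorem norm_sub_le_two_mul_infDist (h : StronglyFejerMonotone S x) (hS : S.Nonempty) {xbar : E}
    (hlim : Tendsto x atTop (𝓝 xbar)) (k : ℕ) : ‖x k - xbar‖ ≤ 2 * infDist (x k) S := by
  suffices ‖x k - xbar‖ / 2 ≤ infDist (x k) S by linarith
  refine (le_infDist hS).2 fun u hu => ?_
  have hlimu : ‖xbar - u‖ ≤ ‖x k - u‖ :=
    le_of_tendsto (hlim.sub_const u).norm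
      (eventually_atTop.2 ⟨k, fun j hj => h.antitone_norm_sub hu hj⟩)
  rw [dist_eq_norm]
  linarith [norm_sub_le_norm_sub_add_norm_sub (x k) u xbar, norm_sub_rev u xbar]

theorem norm_succ_sub_le (h : StronglyFejerMonotone S x) {xbar : E} (hxbar : xbar ∈ S)
    (hlim : Tendsto x atTop (𝓝 xbar)) {c : ℝ} (hc : 0 ≤ c) {k : ℕ}
    (hstep : c * infDist (x k) S ≤ ‖x k - x (k + 1)‖) :
    ‖x (k + 1) - xbar‖ ≤ √(1 - (c / 2) ^ 2) * ‖x k - xbar‖ := by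
  refine le_sqrt_one_sub_sq_mul (norm_nonneg _) (by positivity) (h xbar hxbar k) ?_
  have := h.norm_sub_le_two_mul_infDist ⟨xbar, hxbar⟩ hlim k
  nlinarith

end StronglyFejerMonotone

end Fejer

namespace ApproxProj

variable {n : ℕ} {X Ω : Set (EuclideanSpace ℝ (Fin n))} {x p x' : EuclideanSpace ℝ (Fin n)}
  {ε : ℝ}

theorem one_sub_mul_infDist_le (h : ApproxProj X x p ε) : (1 - ε) * infDist x X ≤ ‖x - p‖ := by
  simpa [dist_eq_norm] using one_sub_mul_infDist_le_dist h.1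

theorem sq_norm_sub_add_sq_norm_sub_le (h : ApproxProj X x p ε) {u : EuclideanSpace ℝ (Fin n)}
    (hu : u ∈ X) : ‖x - p‖ ^ 2 + ‖p - u‖ ^ 2 ≤ ‖x - u‖ ^ 2 :=
  sq_norm_sub_add_sq_norm_sub_le_of_inner_nonpos (h.2 u hu)

theorem sq_one_sub_mul_infDist_le {e : ℝ} (hp : ApproxProj X x p ε) (hx' : ApproxProj Ω x x' ε)
    (hΩ : Ω.Nonempty) (hΩsub : Ω ⊆ {z | inner ℝ (x - p) (z - p) ≤ (0 : ℝ)}) (hεe : ε ≤ e)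
    (he : e ≤ 1) : (1 - e) ^ 2 * infDist x X ≤ ‖x - x'‖ := by
  have hdist : (1 - ε) * infDist x X ≤ infDist x Ω :=
    hp.one_sub_mul_infDist_le.trans (norm_sub_le_infDist_of_subset_halfspace hΩ hΩsub)
  calc (1 - e) ^ 2 * infDist x X ≤ (1 - ε) ^ 2 * infDist x X :=
        mul_le_mul_of_nonneg_right (pow_le_pow_left₀ (by linarith) (by linarith) 2) infDist_nonneg
    _ = (1 - ε) * ((1 - ε) * infDist x X) := by ring
    _ ≤ (1 - ε) * infDist x Ω := by gcongr; linarith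
    _ ≤ ‖x - x'‖ := hx'.one_sub_mul_infDist_le

end ApproxProj

theorem stmt18_general {n m : ℕ} (U : Fin m → Set (EuclideanSpace ℝ (Fin n)))
    (hcl : ∀ i, IsClosed (U i))
    (hU : (⋂ i, U i).Nonempty)
    (ε : ℕ → ℝ) (hε : ∀ k, ε k ∈ Set.Ico (0 : ℝ) 1) (hsup : (⨆ k, ε k) < 1)
    (x : ℕ → EuclideanSpace ℝ (Fin n)) (p : ℕ → Fin m → EuclideanSpace ℝ (Fin n))
    (hp : ∀ k i, ApproxProj (U i) (x k) (p k i) (ε k))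
    (hstep : ∀ k, ApproxProj
      (⋂ i, {z : EuclideanSpace ℝ (Fin n) | inner ℝ (x k - p k i) (z - p k i) ≤ (0 : ℝ)})
      (x k) (x (k + 1)) (ε k)) :
    ∃ xbar ∈ ⋂ i, U i, Tendsto x atTop (nhds xbar) ∧
      ∀ ω ∈ Set.Ioo (0 : ℝ) 1, ∀ V ∈ nhds xbar,
        (∀ y ∈ V, ω * Metric.infDist y (⋂ i, U i) ≤ ⨆ i : Fin m, Metric.infDist y (U i)) →
        ∃ N : ℕ, ∀ k ≥ N,
          ‖x (k + 1) - xbar‖ ≤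
            Real.sqrt (1 - (1 - ⨆ j, ε j) ^ 4 * ω ^ 2 / 4) * ‖x k - xbar‖ := by
  set e := ⨆ k, ε k
  have hεe : ∀ k, ε k ≤ e := le_ciSup ⟨1, by rintro _ ⟨k, rfl⟩; exact (hε k).2.le⟩
  have hcut : ∀ k, ⋂ i, U i ⊆ ⋂ i, {z | inner ℝ (x k - p k i) (z - p k i) ≤ (0 : ℝ)} :=
    fun k u hu => Set.mem_iInter.2 fun i =>
      (real_inner_comm _ _).trans_le ((hp k i).2 u (Set.mem_iInter.1 hu i))
  have hfejer : StronglyFejerMonotone (⋂ i, U i) x := fun u hu k =>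
    (hstep k).sq_norm_sub_add_sq_norm_sub_le (hcut k hu)
  have hkey : ∀ k i, (1 - e) ^ 2 * infDist (x k) (U i) ≤ ‖x k - x (k + 1)‖ := fun k i =>
    (hp k i).sq_one_sub_mul_infDist_le (hstep k) (hU.mono (hcut k)) (Set.iInter_subset _ i)
      (hεe k) hsup.le
  have hpos : 0 < (1 - e) ^ 2 := by have := sub_pos.2 hsup; positivity
  obtain ⟨xbar, hxbar, hlim⟩ := hfejer.exists_tendsto hcl hU fun i =>
    squeeze_zero (fun _ => infDist_nonneg) (fun k => (le_div_iff₀' hpos).2 (hkey k i))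
      (by simpa using (hfejer.tendsto_norm_sub_succ hU).div_const _)
  refine ⟨xbar, hxbar, hlim, fun ω hω V hV herr => ?_⟩
  obtain ⟨N, hN⟩ := eventually_atTop.1 (hlim.eventually_mem hV)
  refine ⟨N, fun k hk => ?_⟩
  have hrate : (1 - e) ^ 4 * ω ^ 2 / 4 = ((1 - e) ^ 2 * ω / 2) ^ 2 := by ring
  rw [hrate]
  refine hfejer.norm_succ_sub_le hxbar hlim (by have := hω.1; positivity) ?_
  calc (1 - e) ^ 2 * ω * infDist (x k) (⋂ i, U i)
      ≤ (1 - e) ^ 2 * ⨆ i, infDist (x k) (U i) := by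
        rw [mul_assoc]; gcongr; exact herr _ (hN k hk)
    _ = ⨆ i, (1 - e) ^ 2 * infDist (x k) (U i) := Real.mul_iSup_of_nonneg hpos.le _
    _ ≤ ‖x k - x (k + 1)‖ := Real.iSup_le (hkey k) (norm_nonneg _)

/-- Global and linear convergence of A3PM. -/
theorem stmt18 {n m : ℕ} (hm : 0 < m) (U : Fin m → Set (EuclideanSpace ℝ (Fin n)))
    (hne : ∀ i, (U i).Nonempty) (hcl : ∀ i, IsClosed (U i)) (hcv : ∀ i, Convex ℝ (U i))
    (hU : (⋂ i, U i).Nonempty)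
    (ε : ℕ → ℝ) (hε : ∀ k, ε k ∈ Set.Ico (0 : ℝ) 1) (hsup : (⨆ k, ε k) < 1)
    (x : ℕ → EuclideanSpace ℝ (Fin n)) (p : ℕ → Fin m → EuclideanSpace ℝ (Fin n))
    (hp : ∀ k i, ApproxProj (U i) (x k) (p k i) (ε k))
    (hstep : ∀ k, ApproxProj
      (⋂ i, {z : EuclideanSpace ℝ (Fin n) | inner ℝ (x k - p k i) (z - p k i) ≤ (0 : ℝ)})
      (x k) (x (k + 1)) (ε k)) :
    ∃ xbar ∈ ⋂ i, U i, Tendsto x atTop (nhds xbar) ∧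
      ∀ ω ∈ Set.Ioo (0 : ℝ) 1, ∀ V ∈ nhds xbar,
        (∀ y ∈ V, ω * Metric.infDist y (⋂ i, U i) ≤ ⨆ i : Fin m, Metric.infDist y (U i)) →
        ∃ N : ℕ, ∀ k ≥ N,
          ‖x (k + 1) - xbar‖ ≤
            Real.sqrt (1 - (1 - ⨆ j, ε j) ^ 4 * ω ^ 2 / 4) * ‖x k - xbar‖ :=
  stmt18_general U hcl hU ε hε hsup x p hp hstep
end
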